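/- Let X and Y be Banach spaces, p ∈ (1,∞) with conjugate exponent p′, n ∈ ℕ, and u_1,…,u_n ∈ X, v_1,…,v_n ∈ Y. Let ε_1,…,ε_n be independent unbiased random signs on a probability space (Ω,ℱ,ℙ). Then ‖ Σ_{k=1}^n u_k ⊗ v_k ‖_{X⊗̂Y} ≤ ‖ Σ_{k=1}^n ε_k u_k ‖_{L^p(Ω;X)} · ‖ Σ_{k=1}^n ε_k v_k ‖_{L^{p′}(Ω;Y)}. -/

import Mathlib

open MeasureTheory
open scoped ENNReal TensorProduct

noncomputable section

/-- `ε 1, …, ε n` are independent unbiased random signs on the probability space `(Ω, ℙ)`. -/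
def IsRandomSigns {Ω : Type*} [MeasurableSpace Ω] (P : Measure Ω) {n : ℕ}
    (ε : Fin n → Ω → ℝ) : Prop :=
  (∀ k, Measurable (ε k)) ∧
    (∀ k, P {ω | ε k ω = 1} = 1 / 2 ∧ P {ω | ε k ω = -1} = 1 / 2) ∧
    ProbabilityTheory.iIndepFun (m := fun _ => (inferInstance : MeasurableSpace ℝ)) ε P

variable {X Y : Type*} [NormedAddCommGroup X] [NormedSpace ℝ X]
  [NormedAddCommGroup Y] [NormedSpace ℝ Y]

/-- The set of costs `Σ_k ‖x_k‖‖y_k‖` of finite representations `v = Σ_k x_k ⊗ y_k`. -/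
def projReps (v : X ⊗[ℝ] Y) : Set ℝ :=
  {c | ∃ (n : ℕ) (a : Fin n → X) (b : Fin n → Y),
    v = ∑ i, a i ⊗ₜ[ℝ] b i ∧ c = ∑ i, ‖a i‖ * ‖b i‖}

/-- The projective tensor norm `‖v‖_∧` on the algebraic tensor product `X ⊗ Y`. -/
def projNorm (v : X ⊗[ℝ] Y) : ℝ := sInf (projReps v)

/-!
Sum over all sign vectors `s ∈ {±1}ⁿ` (encoded as `Fin n → ℤˣ`). Orthogonality of the signs,
`∑ₛ sⱼ sₖ = 2ⁿ δⱼₖ`, gives `∑ₖ uₖ ⊗ vₖ = 2⁻ⁿ ∑ₛ (∑ₖ sₖ uₖ) ⊗ (∑ₖ sₖ vₖ)`, so the projective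
norm is at most the average of `‖∑ₖ sₖ uₖ‖ ‖∑ₖ sₖ vₖ‖` over `s`. Under independent unbiased signs
every sign vector has probability `2⁻ⁿ`, so that average is at most
`𝔼 ‖∑ₖ εₖ uₖ‖ ‖∑ₖ εₖ vₖ‖`, and Hölder's inequality bounds the expectation.
-/

theorem Int.sum_units_mul_units {n : ℕ} (j k : Fin n) :
    ∑ s : Fin n → ℤˣ, ((s j : ℤ) * s k) = if j = k then 2 ^ n else 0 := by
  split_ifs with hjk
  · subst hjk
    simp [Fintype.card_pi]
  · have hflip := Fintype.sum_equiv (Equiv.mulRight (Pi.mulSingle j (-1)))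
      (fun s : Fin n → ℤˣ => ((s j : ℤ) * s k)) (fun s => -((s j : ℤ) * s k))
      (fun s => by simp [Pi.mulSingle_eq_of_ne' hjk])
    rw [Finset.sum_neg_distrib] at hflip
    omega

theorem LinearMap.sum_units_apply_sum_smul {R M N Q : Type*} [CommRing R] [AddCommGroup M]
    [Module R M] [AddCommGroup N] [Module R N] [AddCommGroup Q] [Module R Q]
    (B : M →ₗ[R] N →ₗ[R] Q) {n : ℕ} (u : Fin n → M) (v : Fin n → N) :
    ∑ s : Fin n → ℤˣ, B (∑ j, (s j : R) • u j) (∑ k, (s k : R) • v k) =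
      (2 ^ n : R) • ∑ k, B (u k) (v k) := by
  have hsigns (j k : Fin n) : ∑ s : Fin n → ℤˣ, (s j : R) * s k = if j = k then 2 ^ n else 0 := by
    exact_mod_cast congrArg (Int.cast : ℤ → R) (Int.sum_units_mul_units j k)
  simp only [map_sum, LinearMap.sum_apply, map_smul, LinearMap.smul_apply, Finset.smul_sum,
    smul_smul]
  rw [Finset.sum_comm]
  refine Finset.sum_congr rfl fun k _ => ?_
  rw [Finset.sum_comm]
  simp only [← Finset.sum_smul, hsigns, ite_smul, zero_smul, Finset.sum_ite_eq,
    Finset.mem_univ, if_true]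

theorem projNorm_sum_tmul_le {ι : Type*} [Fintype ι] (a : ι → X) (b : ι → Y) :
    projNorm (∑ i, a i ⊗ₜ[ℝ] b i) ≤ ∑ i, ‖a i‖ * ‖b i‖ := by
  let e := Fintype.equivFin ι
  refine csInf_le ⟨0, ?_⟩ ⟨Fintype.card ι, a ∘ e.symm, b ∘ e.symm, ?_, ?_⟩
  · rintro c ⟨m, a', b', -, rfl⟩
    positivity
  · exact (e.symm.sum_comp fun i => a i ⊗ₜ[ℝ] b i).symm
  · exact (e.symm.sum_comp fun i => ‖a i‖ * ‖b i‖).symm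

theorem projNorm_sum_tmul_le_average {n : ℕ} (u : Fin n → X) (v : Fin n → Y) :
    projNorm (∑ k, u k ⊗ₜ[ℝ] v k) ≤
      (∑ s : Fin n → ℤˣ, ‖∑ k, (s k : ℝ) • u k‖ * ‖∑ k, (s k : ℝ) • v k‖) / 2 ^ n := by
  have hrep : ∑ k, u k ⊗ₜ[ℝ] v k =
      ∑ s : Fin n → ℤˣ, ((2 ^ n : ℝ)⁻¹ • ∑ k, (s k : ℝ) • u k) ⊗ₜ[ℝ] ∑ k, (s k : ℝ) • v k := by
    have h : ∑ s : Fin n → ℤˣ, (∑ k, (s k : ℝ) • u k) ⊗ₜ[ℝ] ∑ k, (s k : ℝ) • v k =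
        (2 ^ n : ℝ) • ∑ k, u k ⊗ₜ[ℝ] v k :=
      (TensorProduct.mk ℝ X Y).sum_units_apply_sum_smul u v
    simp only [← TensorProduct.smul_tmul', ← Finset.smul_sum, h]
    rw [inv_smul_smul₀ (by positivity)]
  calc projNorm (∑ k, u k ⊗ₜ[ℝ] v k)
      ≤ ∑ s : Fin n → ℤˣ, ‖(2 ^ n : ℝ)⁻¹ • ∑ k, (s k : ℝ) • u k‖ * ‖∑ k, (s k : ℝ) • v k‖ :=
        hrep ▸ projNorm_sum_tmul_le _ _
    _ = _ := by simp [norm_smul, div_eq_inv_mul, mul_assoc, Finset.mul_sum]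

namespace IsRandomSigns

variable {Ω : Type*} [MeasurableSpace Ω] {P : Measure Ω} {n : ℕ} {ε : Fin n → Ω → ℝ}

theorem measure_preimage_unit (hε : IsRandomSigns P ε) (k : Fin n) (s : ℤˣ) :
    P (ε k ⁻¹' {(s : ℝ)}) = 2⁻¹ := by
  rcases Int.units_eq_one_or s with rfl | rfl
  · rw [Units.val_one, Int.cast_one, ← one_div]
    exact (hε.2.1 k).1
  · rw [Units.val_neg, Units.val_one, Int.cast_neg, Int.cast_one, ← one_div]
    exact (hε.2.1 k).2

theorem map_singleton [IsProbabilityMeasure P] (hε : IsRandomSigns P ε) (s : Fin n → ℤˣ) :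
    P.map (fun ω k => ε k ω) {fun k => (s k : ℝ)} = 2⁻¹ ^ n := by
  rw [(ProbabilityTheory.iIndepFun_iff_map_fun_eq_pi_map
      fun k => (hε.1 k).aemeasurable).1 hε.2.2, ← Set.univ_pi_singleton, Measure.pi_pi,
    Finset.prod_congr rfl fun k _ => by
    rw [Measure.map_apply (hε.1 k) (measurableSet_singleton _), hε.measure_preimage_unit]]
  simp

theorem sum_div_le_lintegral [IsProbabilityMeasure P] (hε : IsRandomSigns P ε)
    (F : (Fin n → ℝ) → ℝ≥0∞) :
    (∑ s : Fin n → ℤˣ, F (fun k => s k)) / 2 ^ n ≤ ∫⁻ ω, F (fun k => ε k ω) ∂P := by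
  have hinj : Function.Injective fun (s : Fin n → ℤˣ) (k : Fin n) => (s k : ℝ) :=
    fun s t hst => funext fun k => Units.ext (Int.cast_injective (congrFun hst k))
  calc (∑ s : Fin n → ℤˣ, F (fun k => s k)) / 2 ^ n
      = ∑ x ∈ Finset.univ.image fun (s : Fin n → ℤˣ) (k : Fin n) => (s k : ℝ),
          F x * P.map (fun ω k => ε k ω) {x} := by
        rw [Finset.sum_image fun s _ t _ hst => hinj hst]
        simp [hε.map_singleton, div_eq_mul_inv, Finset.sum_mul, ENNReal.inv_pow]
    _ = ∫⁻ x in ↑(Finset.univ.image fun (s : Fin n → ℤˣ) (k : Fin n) => (s k : ℝ)), F x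
          ∂P.map (fun ω k => ε k ω) := (lintegral_finset _ _).symm
    _ ≤ ∫⁻ x, F x ∂P.map (fun ω k => ε k ω) := setLIntegral_le_lintegral _ _
    _ ≤ ∫⁻ ω, F (fun k => ε k ω) ∂P := lintegral_map_le _ _

theorem ae_abs_eq_one [IsProbabilityMeasure P] (hε : IsRandomSigns P ε) :
    ∀ᵐ ω ∂P, ∀ k, |ε k ω| = 1 := by
  refine ae_all_iff.2 fun k => ?_
  have hone : MeasurableSet {ω | ε k ω = 1} := hε.1 k (measurableSet_singleton 1)
  have hneg : MeasurableSet {ω | ε k ω = -1} := hε.1 k (measurableSet_singleton (-1))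
  have hdisj : Disjoint {ω | ε k ω = 1} {ω | ε k ω = -1} :=
    Set.disjoint_left.2 fun ω (h1 : ε k ω = 1) (h2 : ε k ω = -1) => by linarith
  have hfull : P ({ω | ε k ω = 1} ∪ {ω | ε k ω = -1}) = 1 := by
    rw [measure_union hdisj hneg, (hε.2.1 k).1, (hε.2.1 k).2, ENNReal.add_halves]
  have hnull : P ({ω | ε k ω = 1} ∪ {ω | ε k ω = -1})ᶜ = 0 :=
    (prob_compl_eq_zero_iff (hone.union hneg)).2 hfull
  filter_upwards [measure_eq_zero_iff_ae_notMem.1 hnull] with ω hω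
  rcases or_iff_not_imp_left.2 (by simpa using hω) with h | h <;> simp [h]

theorem memLp_sum_smul [IsProbabilityMeasure P] (hε : IsRandomSigns P ε) {E : Type*}
    [NormedAddCommGroup E] [NormedSpace ℝ E] (u : Fin n → E) (p : ℝ≥0∞) :
    MemLp (fun ω => ∑ k, ε k ω • u k) p P := by
  refine MemLp.of_bound (Finset.aestronglyMeasurable_fun_sum _ fun k _ =>
    (hε.1 k).aestronglyMeasurable.smul_const (u k)) (∑ k, ‖u k‖) ?_
  filter_upwards [hε.ae_abs_eq_one] with ω hω
  calc ‖∑ k, ε k ω • u k‖ ≤ ∑ k, ‖ε k ω • u k‖ := norm_sum_le _ _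
    _ = ∑ k, ‖u k‖ := by simp [norm_smul, hω]

end IsRandomSigns

theorem lintegral_enorm_mul_le_eLpNorm_mul_eLpNorm {α E F : Type*} [MeasurableSpace α]
    {μ : Measure α} [NormedAddCommGroup E] [NormedAddCommGroup F] {f : α → E} {g : α → F}
    {p q : ℝ≥0∞} [p.HolderConjugate q] (hf : AEStronglyMeasurable f μ)
    (hg : AEStronglyMeasurable g μ) :
    ∫⁻ x, ‖f x‖ₑ * ‖g x‖ₑ ∂μ ≤ eLpNorm f p μ * eLpNorm g q μ := by
  have h := eLpNorm_le_eLpNorm_mul_eLpNorm_of_nnnorm (p := p) (q := q) (r := 1) hf hg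
    (fun x y => ‖x‖ * ‖y‖) 1 (Filter.Eventually.of_forall fun x => by simp)
  simpa [eLpNorm_one_eq_lintegral_enorm, enorm_mul] using h

/-- `‖Σ_k u_k ⊗ v_k‖_{X⊗̂Y} ≤ ‖Σ_k ε_k u_k‖_{L^p(Ω;X)} ‖Σ_k ε_k v_k‖_{L^{p'}(Ω;Y)}`
for independent unbiased random signs `ε_k`. -/
theorem statement6 (X Y : Type*)
    [NormedAddCommGroup X] [NormedSpace ℝ X] [NormedAddCommGroup Y] [NormedSpace ℝ Y]
    (p q : ℝ) (hp : 1 < p) (hpq : 1 / p + 1 / q = 1)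
    (n : ℕ) (u : Fin n → X) (v : Fin n → Y)
    (Ω : Type*) [MeasurableSpace Ω] (P : Measure Ω) [IsProbabilityMeasure P]
    (ε : Fin n → Ω → ℝ) (hε : IsRandomSigns P ε) :
    projNorm (∑ k, u k ⊗ₜ[ℝ] v k) ≤
      (eLpNorm (fun ω => ∑ k, ε k ω • u k) (ENNReal.ofReal p) P).toReal *
        (eLpNorm (fun ω => ∑ k, ε k ω • v k) (ENNReal.ofReal q) P).toReal := by
  have : (ENNReal.ofReal p).HolderConjugate (ENNReal.ofReal q) :=
    (Real.holderConjugate_iff.2 ⟨hp, by simpa only [one_div] using hpq⟩).ennrealOfReal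
  have hu := hε.memLp_sum_smul u (ENNReal.ofReal p)
  have hv := hε.memLp_sum_smul v (ENNReal.ofReal q)
  calc projNorm (∑ k, u k ⊗ₜ[ℝ] v k)
      ≤ (∑ s : Fin n → ℤˣ, ‖∑ k, (s k : ℝ) • u k‖ * ‖∑ k, (s k : ℝ) • v k‖) / 2 ^ n :=
        projNorm_sum_tmul_le_average u v
    _ = ((∑ s : Fin n → ℤˣ, ‖∑ k, (s k : ℝ) • u k‖ₑ * ‖∑ k, (s k : ℝ) • v k‖ₑ) /
          2 ^ n).toReal := by
        rw [ENNReal.toReal_div, ENNReal.toReal_sum fun s _ => by finiteness]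
        simp
    _ ≤ (eLpNorm (fun ω => ∑ k, ε k ω • u k) (ENNReal.ofReal p) P *
          eLpNorm (fun ω => ∑ k, ε k ω • v k) (ENNReal.ofReal q) P).toReal :=
        ENNReal.toReal_mono (ENNReal.mul_ne_top hu.eLpNorm_ne_top hv.eLpNorm_ne_top) <|
          (hε.sum_div_le_lintegral fun x => ‖∑ k, x k • u k‖ₑ * ‖∑ k, x k • v k‖ₑ).trans
            (lintegral_enorm_mul_le_eLpNorm_mul_eLpNorm hu.1 hv.1)
    _ = _ := ENNReal.toReal_mul
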